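/- arXiv:2509.16672 — 5 statements merged into one kernel-verified Lean document; each statement's English description precedes it below -/
import Mathlib

section
/- Let s, t ∈ ℂ with |s| > |t|. Then for all z, w ∈ ℂ, |K^{(s,t)}(z,w)| ≤ C · exp[ (|s|²+1)(|z|²+|w|²)/(3|s|²−|t|²+1) − (|s|²−|t|²−1)·Re(s·conj(z)·w)/(|s|²·(3|s|²−|t|²+1)) ], where C = |s|^{−1/2}·(2|s|/√(4|s|²−|t|²))^{2(4|s|²−|t|²)/(3|s|²−|t|²+1)} (and C ≥ |s|^{−1/2}). -/
open MeasureTheory Real Filter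

/-- Principal branch of the complex square root. -/
noncomputable def csqrt (z : ℂ) : ℂ := z ^ ((1 : ℂ) / 2)

/-- The canonical integral kernel `K^{(s,t)}(z,w)`. -/
noncomputable def Kst (s t z w : ℂ) : ℂ :=
  (csqrt s)⁻¹ *
    Complex.exp ((t * z ^ 2 - (starRingEnd ℂ) t * ((starRingEnd ℂ) w) ^ 2
      + 2 * z * (starRingEnd ℂ) w) / (2 * s))

/-!
Only the modulus of the prefactor matters, `|s|^{-1/2}`, and `C ≥ |s|^{-1/2}`, so it suffices
to bound the real part of the exponent. Rotating `z ↦ z/ρ`, `w ↦ ρw` with `ρ² = s/|s|` reduces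
to real `s = a > 0`. In the variables `x = |z + w|`, `y = |z - w|` the claim becomes
`D·Re(t(z+w)(z-w)) ≤ P x² + Q y²` with `D = 3a² - |t|² + 1`, `P = a(a-1)² + |t|²`,
`Q = a(a+1)² - |t|²`, and this follows from `|Re(t(z+w)(z-w))| ≤ |t| x y` and AM-GM, since
`4PQ - D²|t|² = (|t|² - a² + 1)²(4a² - |t|²) ≥ 0`.
-/

open ComplexConjugate

noncomputable def kernelExponent (s t z w : ℂ) : ℂ :=
  (t * z ^ 2 - conj t * (conj w) ^ 2 + 2 * z * conj w) / (2 * s)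

lemma norm_csqrt (z : ℂ) : ‖csqrt z‖ = ‖z‖ ^ (1 / 2 : ℝ) := by
  rw [csqrt, show (1 : ℂ) / 2 = ((1 / 2 : ℝ) : ℂ) by push_cast; ring, Complex.norm_cpow_real]

lemma norm_Kst (s t z w : ℂ) :
    ‖Kst s t z w‖ = ‖s‖ ^ (-(1 : ℝ) / 2) * Real.exp (kernelExponent s t z w).re := by
  rw [Kst, norm_mul, norm_inv, Complex.norm_exp, norm_csqrt, ← Real.rpow_neg (norm_nonneg s),
    neg_div, kernelExponent]

lemma kernelExponent_mul_sq (r t z w : ℂ) {ρ : ℂ} (hρ : ‖ρ‖ = 1) :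
    kernelExponent (r * ρ ^ 2) t z w = kernelExponent r t (z / ρ) (ρ * w) := by
  have hρ0 : ρ ≠ 0 := by rintro rfl; simp at hρ
  rw [kernelExponent, kernelExponent, map_mul, ← Complex.inv_eq_conj hρ]
  field_simp

lemma mul_mul_le_add_of_sq_le_four_mul {P Q c : ℝ} (hP : 0 ≤ P) (hQ : 0 ≤ Q)
    (h : c ^ 2 ≤ 4 * (P * Q)) (x y : ℝ) : c * (x * y) ≤ P * x ^ 2 + Q * y ^ 2 := by
  have hc : |c| ≤ 2 * (√P * √Q) :=
    calc |c| ≤ √(2 ^ 2 * (P * Q)) := Real.abs_le_sqrt (by linarith)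
      _ = 2 * (√P * √Q) := by
        rw [Real.sqrt_mul (by positivity), Real.sqrt_sq zero_le_two, Real.sqrt_mul hP]
  calc c * (x * y) ≤ |c| * (|x| * |y|) := by rw [← abs_mul, ← abs_mul]; exact le_abs_self _
    _ ≤ 2 * (√P * √Q) * (|x| * |y|) := by gcongr
    _ = 2 * (√P * |x|) * (√Q * |y|) := by ring
    _ ≤ (√P * |x|) ^ 2 + (√Q * |y|) ^ 2 := two_mul_le_add_sq _ _
    _ = P * x ^ 2 + Q * y ^ 2 := by
        rw [mul_pow, mul_pow, Real.sq_sqrt hP, Real.sq_sqrt hQ, sq_abs, sq_abs]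

lemma quadratic_form_bound {a b : ℝ} (hb : 0 ≤ b) (hba : b < a) (x y : ℝ) :
    (3 * a ^ 2 - b ^ 2 + 1) * (b * (x * y)) ≤
      (a * (a - 1) ^ 2 + b ^ 2) * x ^ 2 + (a * (a + 1) ^ 2 - b ^ 2) * y ^ 2 := by
  have ha : 0 < a := hb.trans_lt hba
  have hb2 : b ^ 2 < a ^ 2 := by nlinarith
  rw [← mul_assoc]
  refine mul_mul_le_add_of_sq_le_four_mul (by positivity) (by nlinarith) ?_ x y
  have key : 4 * ((a * (a - 1) ^ 2 + b ^ 2) * (a * (a + 1) ^ 2 - b ^ 2)) -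
      ((3 * a ^ 2 - b ^ 2 + 1) * b) ^ 2 = (b ^ 2 - a ^ 2 + 1) ^ 2 * (4 * a ^ 2 - b ^ 2) := by
    ring
  rw [← sub_nonneg, key]
  exact mul_nonneg (sq_nonneg _) (by nlinarith)

lemma re_kernelExponent_ofReal (a : ℝ) (t z w : ℂ) :
    (kernelExponent a t z w).re = ((t * (z + w) * (z - w)).re + 2 * (z * conj w).re) / (2 * a) := by
  have hnum : t * z ^ 2 - conj t * (conj w) ^ 2 + 2 * z * conj w =
      t * (z + w) * (z - w) + (t * w ^ 2 - conj (t * w ^ 2)) + ((2 : ℝ) : ℂ) * (z * conj w) := by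
    rw [map_mul, map_pow]; push_cast; ring
  rw [kernelExponent, show 2 * (a : ℂ) = ((2 * a : ℝ) : ℂ) by push_cast; ring,
    Complex.div_ofReal_re, hnum, Complex.add_re, Complex.add_re, Complex.sub_re, Complex.conj_re,
    Complex.re_ofReal_mul, sub_self, add_zero]

lemma re_kernelExponent_ofReal_le {a : ℝ} {t : ℂ} (hta : ‖t‖ < a) (z w : ℂ) :
    (kernelExponent a t z w).re ≤
      (a ^ 2 + 1) * (‖z‖ ^ 2 + ‖w‖ ^ 2) / (3 * a ^ 2 - ‖t‖ ^ 2 + 1)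
        - (a ^ 2 - ‖t‖ ^ 2 - 1) * ((a : ℂ) * conj z * w).re / (a ^ 2 * (3 * a ^ 2 - ‖t‖ ^ 2 + 1)) := by
  have ha : 0 < a := (norm_nonneg t).trans_lt hta
  have hD : 0 < 3 * a ^ 2 - ‖t‖ ^ 2 + 1 := by nlinarith [norm_nonneg t]
  have hsum : ‖z‖ ^ 2 + ‖w‖ ^ 2 = (‖z + w‖ ^ 2 + ‖z - w‖ ^ 2) / 2 := by
    simp only [Complex.sq_norm]; linarith [Complex.normSq_add z w, Complex.normSq_sub z w]
  have hpolar : (z * conj w).re = (‖z + w‖ ^ 2 - ‖z - w‖ ^ 2) / 4 := by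
    simp only [Complex.sq_norm]; linarith [Complex.normSq_add z w, Complex.normSq_sub z w]
  have hconj : ((a : ℂ) * conj z * w).re = a * (z * conj w).re := by
    rw [mul_assoc, Complex.re_ofReal_mul, ← Complex.conj_re, map_mul, Complex.conj_conj, mul_comm]
  have hT : (t * (z + w) * (z - w)).re ≤ ‖t‖ * (‖z + w‖ * ‖z - w‖) := by
    simpa only [norm_mul, mul_assoc] using Complex.re_le_norm (t * (z + w) * (z - w))
  have hQ := quadratic_form_bound (norm_nonneg t) hta ‖z + w‖ ‖z - w‖
  rw [re_kernelExponent_ofReal, hconj, hsum, hpolar]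
  set T := (t * (z + w) * (z - w)).re
  set b := ‖t‖
  set x := ‖z + w‖
  set y := ‖z - w‖
  set D := 3 * a ^ 2 - b ^ 2 + 1
  have hdiff : (a ^ 2 + 1) * ((x ^ 2 + y ^ 2) / 2) / D
        - (a ^ 2 - b ^ 2 - 1) * (a * ((x ^ 2 - y ^ 2) / 4)) / (a ^ 2 * D)
        - (T + 2 * ((x ^ 2 - y ^ 2) / 4)) / (2 * a)
      = ((a * (a - 1) ^ 2 + b ^ 2) * x ^ 2 + (a * (a + 1) ^ 2 - b ^ 2) * y ^ 2 - D * T)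
          / (2 * a * D) := by
    field_simp
    ring
  have hnonneg : 0 ≤ ((a * (a - 1) ^ 2 + b ^ 2) * x ^ 2 + (a * (a + 1) ^ 2 - b ^ 2) * y ^ 2 - D * T)
      / (2 * a * D) :=
    div_nonneg (by linarith [mul_le_mul_of_nonneg_left hT hD.le]) (by positivity)
  linarith

lemma re_kernelExponent_le {s t : ℂ} (hst : ‖t‖ < ‖s‖) (z w : ℂ) :
    (kernelExponent s t z w).re ≤
      (‖s‖ ^ 2 + 1) * (‖z‖ ^ 2 + ‖w‖ ^ 2) / (3 * ‖s‖ ^ 2 - ‖t‖ ^ 2 + 1)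
        - (‖s‖ ^ 2 - ‖t‖ ^ 2 - 1) * (s * conj z * w).re /
          (‖s‖ ^ 2 * (3 * ‖s‖ ^ 2 - ‖t‖ ^ 2 + 1)) := by
  set ρ := Complex.exp ((s.arg / 2 : ℝ) * Complex.I)
  have hρ : ‖ρ‖ = 1 := Complex.norm_exp_ofReal_mul_I _
  have hs : s = ‖s‖ * ρ ^ 2 := by
    rw [← Complex.exp_nat_mul]; push_cast
    rw [show (2 : ℂ) * (s.arg / 2 * Complex.I) = s.arg * Complex.I by ring,
      Complex.norm_mul_exp_arg_mul_I]
  have hzw : (‖s‖ : ℂ) * conj (z / ρ) * (ρ * w) = s * conj z * w := by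
    rw [map_div₀, ← Complex.inv_eq_conj hρ]
    conv_rhs => rw [hs]
    field_simp
  have h := re_kernelExponent_ofReal_le hst (z / ρ) (ρ * w)
  rwa [← kernelExponent_mul_sq _ _ _ _ hρ, ← hs, hzw, norm_div, norm_mul, hρ, div_one, one_mul] at h

lemma one_le_two_mul_div_sqrt_rpow {a b : ℝ} (ha : 0 < a) (hba : b ^ 2 ≤ a ^ 2) :
    1 ≤ (2 * a / √(4 * a ^ 2 - b ^ 2)) ^ (2 * (4 * a ^ 2 - b ^ 2) / (3 * a ^ 2 - b ^ 2 + 1)) := by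
  have h4 : 0 < 4 * a ^ 2 - b ^ 2 := by nlinarith
  refine Real.one_le_rpow ?_ (div_nonneg (by linarith) (by nlinarith))
  rw [one_le_div (Real.sqrt_pos.2 h4), ← Real.sqrt_sq (by positivity : 0 ≤ 2 * a)]
  exact Real.sqrt_le_sqrt (by nlinarith)

theorem stmt0 (s t : ℂ) (hst : ‖t‖ < ‖s‖) (C : ℝ)
    (hC : C = (‖s‖) ^ (-(1 : ℝ) / 2) *
      (2 * ‖s‖ / Real.sqrt (4 * ‖s‖ ^ 2 - ‖t‖ ^ 2)) ^
        (2 * (4 * ‖s‖ ^ 2 - ‖t‖ ^ 2) /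
          (3 * ‖s‖ ^ 2 - ‖t‖ ^ 2 + 1))) :
    (∀ z w : ℂ,
      ‖Kst s t z w‖ ≤
        C * Real.exp ((‖s‖ ^ 2 + 1) * (‖z‖ ^ 2 + ‖w‖ ^ 2) /
            (3 * ‖s‖ ^ 2 - ‖t‖ ^ 2 + 1)
          - (‖s‖ ^ 2 - ‖t‖ ^ 2 - 1) * (s * (starRingEnd ℂ) z * w).re /
            (‖s‖ ^ 2 * (3 * ‖s‖ ^ 2 - ‖t‖ ^ 2 + 1)))) ∧
    (‖s‖) ^ (-(1 : ℝ) / 2) ≤ C := by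
  have hs : 0 < ‖s‖ := (norm_nonneg t).trans_lt hst
  have hC_ge : ‖s‖ ^ (-(1 : ℝ) / 2) ≤ C := hC ▸ le_mul_of_one_le_right (by positivity)
    (one_le_two_mul_div_sqrt_rpow hs (by gcongr))
  refine ⟨fun z w => ?_, hC_ge⟩
  rw [norm_Kst]
  gcongr
  · exact (by positivity : (0 : ℝ) ≤ _).trans hC_ge
  · exact re_kernelExponent_le hst z w
end

section
/- Let s, t ∈ ℂ with |s| > |t|. Then for all z, w ∈ ℂ, the integral ∫_ℂ K^{(s,t)}(z,v)·e^{v·conj(w)}·dλ(v) converges absolutely and equals K^{(s,t)}(z,w). (Equivalently, the canonical integral operator T^{(s,t)} maps the Fock reproducing kernel K_w(v) = e^{v·conj(w)} to the function z ↦ K^{(s,t)}(z,w).) -/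
open MeasureTheory Real Filter

/-- Density of the Gaussian measure `dλ(z) = π⁻¹ e^{-|z|²} dA(z)` with respect to
Lebesgue area measure on `ℂ`. -/
noncomputable def gw (z : ℂ) : ℝ := Real.exp (-‖z‖ ^ 2) / Real.pi

/-!
With `β = -conj t / (2 s)`, `γ = conj w`, `δ = z / s`, the integrand is a constant multiple of
`exp (β v̄² + γ v + δ v̄ - |v|²)`, a Gaussian in the real coordinates of `v`, integrable because
`|β| < 1`. Integrating first over `Im v` and then over `Re v` with the one-variable formula
`∫ exp (b y² + c y + d) dy = (π / -b)^{1/2} exp (d - c² / 4b)` gives `π exp (β γ² + γ δ)`: the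
two square roots `(π / (1 + β))^{1/2}` and `(π (1 + β))^{1/2}` multiply to `π` since
`Re (1 + β) > 0`.
-/

open Complex ComplexConjugate

theorem Complex.ofReal_mul_cpow {r : ℝ} (hr : 0 < r) {x : ℂ} (hx : x ≠ 0) (s : ℂ) :
    ((r : ℂ) * x) ^ s = (r : ℂ) ^ s * x ^ s := by
  have hr' : (r : ℂ) ≠ 0 := ofReal_ne_zero.2 hr.ne'
  rw [cpow_def_of_ne_zero (mul_ne_zero hr' hx), log_ofReal_mul hr hx, ofReal_log hr.le,
    add_mul, Complex.exp_add, cpow_def_of_ne_zero hr', cpow_def_of_ne_zero hx]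

theorem Complex.cpow_half_div_mul_cpow_half_mul {r : ℝ} (hr : 0 < r) {w : ℂ} (hw : 0 < w.re) :
    ((r : ℂ) / w) ^ (1 / 2 : ℂ) * ((r : ℂ) * w) ^ (1 / 2 : ℂ) = r := by
  have hw0 : w ≠ 0 := fun h => by simp [h] at hw
  have harg : w.arg ≠ π := fun h => by linarith [(arg_eq_pi_iff.1 h).1]
  have hr_sq : (r : ℂ) ^ (1 / 2 : ℂ) * (r : ℂ) ^ (1 / 2 : ℂ) = r := by
    rw [← cpow_add _ _ (ofReal_ne_zero.2 hr.ne')]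
    norm_num
  have hw_sqrt : w ^ (1 / 2 : ℂ) ≠ 0 := cpow_ne_zero_iff.2 (Or.inl hw0)
  rw [div_eq_mul_inv, ofReal_mul_cpow hr (inv_ne_zero hw0), ofReal_mul_cpow hr hw0,
    inv_cpow _ _ harg]
  calc _ = ((r : ℂ) ^ (1 / 2 : ℂ) * (r : ℂ) ^ (1 / 2 : ℂ)) *
        ((w ^ (1 / 2 : ℂ))⁻¹ * w ^ (1 / 2 : ℂ)) := by ring
    _ = r := by rw [hr_sq, inv_mul_cancel₀ hw_sqrt, mul_one]

theorem Complex.integral_eq_integral_prod {E : Type*} [NormedAddCommGroup E] [NormedSpace ℝ E]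
    (f : ℂ → E) : ∫ v, f v = ∫ p : ℝ × ℝ, f ⟨p.1, p.2⟩ ∂(volume.prod volume) := by
  rw [← Measure.volume_eq_prod]
  exact ((volume_preserving_equiv_real_prod.symm).integral_comp
    measurableEquivRealProd.symm.measurableEmbedding f).symm

theorem Complex.integrable_iff_integrable_prod {E : Type*} [NormedAddCommGroup E] {f : ℂ → E} :
    Integrable f ↔ Integrable (fun p : ℝ × ℝ => f ⟨p.1, p.2⟩) (volume.prod volume) := by
  rw [← Measure.volume_eq_prod]
  exact ((volume_preserving_equiv_real_prod.symm).integrable_comp_emb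
    measurableEquivRealProd.symm.measurableEmbedding).symm

def gaussExponent (β γ δ v : ℂ) : ℂ := β * conj v ^ 2 + γ * v + δ * conj v - v * conj v

theorem re_gaussExponent_le (β γ δ v : ℂ) :
    (gaussExponent β γ δ v).re ≤ -(1 - ‖β‖) * ‖v‖ ^ 2 + (‖γ‖ + ‖δ‖) * ‖v‖ := by
  have hquad : (v * conj v).re = ‖v‖ ^ 2 := by
    rw [mul_conj, ofReal_re, normSq_eq_norm_sq]
  have hlin : (β * conj v ^ 2 + γ * v + δ * conj v).re ≤
      ‖β‖ * ‖v‖ ^ 2 + (‖γ‖ + ‖δ‖) * ‖v‖ := by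
    refine (re_le_norm _).trans ((norm_add₃_le).trans (le_of_eq ?_))
    simp only [norm_mul, norm_pow, Complex.norm_conj]
    ring
  rw [gaussExponent, sub_re, hquad]
  linarith

theorem integrable_cexp_gaussExponent {β : ℂ} (hβ : ‖β‖ < 1) (γ δ : ℂ) :
    Integrable fun v => cexp (gaussExponent β γ δ v) := by
  set a := 1 - ‖β‖
  set M := ‖γ‖ + ‖δ‖
  have ha : 0 < a := by linarith
  have hG := GaussianFourier.integrable_cexp_neg_mul_sq_norm_add (V := ℂ) (b := (a / 2 : ℝ))
    (by simpa using ha) 0 0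
  refine (hG.norm.const_mul (Real.exp (M ^ 2 / (2 * a)))).mono'
    (by unfold gaussExponent; fun_prop) (Eventually.of_forall fun v => ?_)
  have hsq : -a * ‖v‖ ^ 2 + M * ‖v‖ ≤ M ^ 2 / (2 * a) + -(a / 2) * ‖v‖ ^ 2 := by
    have := sq_nonneg (a * ‖v‖ - M)
    rw [div_add' _ _ _ (by positivity), le_div_iff₀ (by positivity)]
    nlinarith
  simp only [norm_exp, ← ofReal_pow, ← ofReal_neg, ← ofReal_mul, inner_zero_left, ofReal_zero,
    mul_zero, add_zero, ofReal_re, ← Real.exp_add]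
  exact Real.exp_le_exp.2 ((re_gaussExponent_le β γ δ v).trans hsq)

theorem gaussExponent_mk (β γ δ : ℂ) (x y : ℝ) :
    gaussExponent β γ δ ⟨x, y⟩ = -(1 + β) * y ^ 2 + (I * (γ - δ) - 2 * I * β * x) * y
      + ((β - 1) * x ^ 2 + (γ + δ) * x) := by
  rw [mk_eq_add_mul_I, gaussExponent]
  simp only [map_add, map_mul, conj_ofReal, conj_I]
  linear_combination (β * (y : ℂ) ^ 2 + (y : ℂ) ^ 2) * I_sq

theorem integral_cexp_gaussExponent {β : ℂ} (hβ : ‖β‖ < 1) (γ δ : ℂ) :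
    ∫ v, cexp (gaussExponent β γ δ v) = π * cexp (β * γ ^ 2 + γ * δ) := by
  have hre : 0 < (1 + β).re := by
    rw [add_re, one_re]
    linarith [neg_lt_of_abs_lt ((abs_re_le_norm β).trans_lt hβ)]
  have hβ1 : 1 + β ≠ 0 := fun h => by simp [h] at hre
  have hinner (x : ℝ) : ∫ y : ℝ, cexp (gaussExponent β γ δ ⟨x, y⟩) =
      (π / (1 + β)) ^ (1 / 2 : ℂ) * cexp (-(1 + β)⁻¹ * x ^ 2
        + (γ * (2 * β + 1) + δ) / (1 + β) * x + -(γ - δ) ^ 2 / (4 * (1 + β))) := by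
    have hb : (-(1 + β)).re < 0 := by rw [neg_re]; linarith
    simp_rw [gaussExponent_mk, integral_cexp_quadratic hb, neg_neg]
    congr 2
    field_simp
    linear_combination (γ - δ - 2 * β * x) ^ 2 * I_sq
  have hre' : (-(1 + β)⁻¹).re < 0 := by
    simpa [inv_re] using div_pos hre (normSq_pos.2 hβ1)
  rw [integral_eq_integral_prod, integral_prod _
      (integrable_iff_integrable_prod.1 (integrable_cexp_gaussExponent hβ γ δ))]
  simp_rw [hinner]
  rw [integral_const_mul, integral_cexp_quadratic hre', neg_neg, div_inv_eq_mul, ← mul_assoc,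
    cpow_half_div_mul_cpow_half_mul pi_pos hre]
  congr 2
  field_simp
  ring

theorem ofReal_gw (v : ℂ) : (gw v : ℂ) = cexp (-(v * conj v)) / π := by
  rw [gw, mul_conj, normSq_eq_norm_sq, ofReal_div, ofReal_exp, ofReal_neg, ofReal_pow]

theorem Kst_eq_mul_cexp {s : ℂ} (hs : s ≠ 0) (t z w : ℂ) :
    Kst s t z w = (csqrt s)⁻¹ * cexp (t * z ^ 2 / (2 * s)) *
      cexp (-conj t / (2 * s) * conj w ^ 2 + conj w * (z / s)) := by
  rw [Kst, mul_assoc ((csqrt s)⁻¹), ← Complex.exp_add]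
  congr 2
  field_simp
  ring

theorem Kst_mul_cexp_mul_gw {s : ℂ} (hs : s ≠ 0) (t z w v : ℂ) :
    Kst s t z v * cexp (v * conj w) * (gw v : ℂ) =
      (csqrt s)⁻¹ * cexp (t * z ^ 2 / (2 * s)) / π *
        cexp (gaussExponent (-conj t / (2 * s)) (conj w) (z / s) v) := by
  rw [Kst_eq_mul_cexp hs, ofReal_gw]
  calc _ = (csqrt s)⁻¹ * cexp (t * z ^ 2 / (2 * s)) / π *
        cexp (-conj t / (2 * s) * conj v ^ 2 + conj v * (z / s) + v * conj w + -(v * conj v)) := by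
        simp only [Complex.exp_add]
        ring
    _ = _ := by
        rw [gaussExponent]
        ring_nf

theorem stmt2 (s t : ℂ) (hst : ‖t‖ < ‖s‖) :
    ∀ z w : ℂ,
      Integrable (fun v : ℂ =>
        Kst s t z v * Complex.exp (v * (starRingEnd ℂ) w) * (gw v : ℂ)) ∧
      (∫ v : ℂ, Kst s t z v * Complex.exp (v * (starRingEnd ℂ) w) * (gw v : ℂ))
        = Kst s t z w := by
  intro z w
  have hs : s ≠ 0 := norm_pos_iff.1 ((norm_nonneg t).trans_lt hst)
  have hβ : ‖-conj t / (2 * s)‖ < 1 := by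
    rw [norm_div, norm_neg, Complex.norm_conj, norm_mul, Complex.norm_two,
      div_lt_one (by positivity)]
    linarith [norm_nonneg t]
  simp_rw [Kst_mul_cexp_mul_gw hs]
  refine ⟨(integrable_cexp_gaussExponent hβ _ _).const_mul _, ?_⟩
  rw [integral_const_mul, integral_cexp_gaussExponent hβ, Kst_eq_mul_cexp hs]
  field_simp
end

section
/- Let p > 0 and s, t ∈ ℂ with |s|² > |t|² + 1. Then ∫_ℂ ( e^{−|z|²} · ∫_ℂ |K^{(s,t)}(u,z)|²·dλ(u) )^{p/2} · dA(z) = 2π·|s| / ( p·(|s|²−|t|²−1)·(|s|²−|t|²)^{(p−2)/4} ). -/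
/-! A rotation `z ↦ c z` diagonalises the quadratic form `-α|z|² + Re(β z²)` into
`-(α - |β|) x² - (α + |β|) y²`, so a Gaussian integral over `ℂ` with this quadratic part is a
product of two one-dimensional ones. Writing `D = |s|² - |t|²`, the inner integral over `u` is of this form, and
the Berezin transform of `|T^{(s,t)}|²` comes out as the Gaussian
`D^{-1/2} exp(-(1 - 1/D)(|z|² + Re(t z² / s̄)))`; its `p/2`-th power is integrated by the same
formula. -/

open MeasureTheory Real Filter

open ComplexConjugate

theorem integral_exp_neg_mul_sq_add_mul {a : ℝ} (ha : 0 < a) (b : ℝ) :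
    ∫ x : ℝ, exp (-a * x ^ 2 + b * x) = √(π / a) * exp (b ^ 2 / (4 * a)) := by
  have h := integral_cexp_quadratic (b := -a) (by simpa using ha) b 0
  simp only [neg_neg, add_zero, zero_sub] at h
  have hpow : ((π : ℂ) / a) ^ (1 / 2 : ℂ) = ((√(π / a) : ℝ) : ℂ) := by
    rw [sqrt_eq_rpow, Complex.ofReal_cpow (by positivity)]
    push_cast; rfl
  rw [hpow] at h
  apply Complex.ofReal_injective
  rw [← integral_complex_ofReal]
  push_cast
  convert h using 3
  ring_nf

theorem integral_exp_neg_mul_norm_sq_add_mul_re_sq_add_re {α b : ℝ} (hb : |b| < α) (γ : ℂ) :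
    ∫ z : ℂ, exp (-α * ‖z‖ ^ 2 + b * (z ^ 2).re + (γ * z).re) =
      π / √(α ^ 2 - b ^ 2) *
        exp ((α * ‖γ‖ ^ 2 + b * (conj γ ^ 2).re) / (4 * (α ^ 2 - b ^ 2))) := by
  obtain ⟨hαb, hαb'⟩ : 0 < α - b ∧ 0 < α + b := by
    constructor <;> linarith [neg_abs_le b, le_abs_self b]
  have hD : α ^ 2 - b ^ 2 = (α - b) * (α + b) := by ring
  have hsplit : ∀ v : ℝ × ℝ,
      exp (-α * ‖Complex.measurableEquivRealProd.symm v‖ ^ 2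
        + b * ((Complex.measurableEquivRealProd.symm v) ^ 2).re
        + (γ * Complex.measurableEquivRealProd.symm v).re) =
      exp (-(α - b) * v.1 ^ 2 + γ.re * v.1) * exp (-(α + b) * v.2 ^ 2 + (-γ.im) * v.2) := by
    intro v
    rw [← exp_add, Complex.sq_norm, Complex.normSq_apply]
    simp only [Complex.measurableEquivRealProd_symm_apply, sq, Complex.mul_re]
    ring_nf
  rw [← Complex.volume_preserving_equiv_real_prod.symm.integral_comp
    Complex.measurableEquivRealProd.symm.measurableEmbedding]
  simp_rw [hsplit]
  rw [Measure.volume_eq_prod, integral_prod_mul (fun x => exp (-(α - b) * x ^ 2 + γ.re * x))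
    (fun y => exp (-(α + b) * y ^ 2 + (-γ.im) * y)), integral_exp_neg_mul_sq_add_mul hαb,
    integral_exp_neg_mul_sq_add_mul hαb']
  have hroot : √(π / (α - b)) * √(π / (α + b)) = π / √(α ^ 2 - b ^ 2) := by
    rw [← sqrt_mul (by positivity), div_mul_div_comm, ← sq, ← hD, sqrt_div (sq_nonneg π),
      sqrt_sq pi_pos.le]
  have hexp : γ.re ^ 2 / (4 * (α - b)) + (-γ.im) ^ 2 / (4 * (α + b)) =
      (α * ‖γ‖ ^ 2 + b * (conj γ ^ 2).re) / (4 * (α ^ 2 - b ^ 2)) := by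
    rw [Complex.sq_norm, Complex.normSq_apply, hD]
    simp only [sq, Complex.mul_re, Complex.conj_re, Complex.conj_im]
    field_simp
    ring
  rw [← hroot, ← hexp, exp_add]
  ring

theorem integral_comp_mul_left_of_norm_eq_one {E : Type*} [NormedAddCommGroup E]
    [NormedSpace ℝ E] {c : ℂ} (hc : ‖c‖ = 1) (f : ℂ → E) :
    ∫ z, f (c * z) = ∫ z, f z :=
  let R := rotation ⟨c, by simpa [Submonoid.unitSphere] using hc⟩
  R.measurePreserving.integral_comp R.toHomeomorph.measurableEmbedding f

theorem exists_norm_eq_one_sq_mul_eq_norm (β : ℂ) : ∃ c : ℂ, ‖c‖ = 1 ∧ c ^ 2 * β = ‖β‖ := by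
  refine ⟨Complex.exp (↑(-(β.arg / 2)) * Complex.I), Complex.norm_exp_ofReal_mul_I _, ?_⟩
  conv_lhs => arg 2; rw [← Complex.norm_mul_exp_arg_mul_I β]
  rw [← Complex.exp_nat_mul, mul_left_comm, ← Complex.exp_add]
  push_cast
  ring_nf
  rw [Complex.exp_zero, mul_one]

theorem integral_exp_neg_mul_norm_sq_add_re_mul_sq_add_re {α : ℝ} {β : ℂ} (hβ : ‖β‖ < α)
    (γ : ℂ) :
    ∫ z : ℂ, exp (-α * ‖z‖ ^ 2 + (β * z ^ 2).re + (γ * z).re) =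
      π / √(α ^ 2 - ‖β‖ ^ 2) *
        exp ((α * ‖γ‖ ^ 2 + (β * conj γ ^ 2).re) / (4 * (α ^ 2 - ‖β‖ ^ 2))) := by
  obtain ⟨c, hc, hcβ⟩ := exists_norm_eq_one_sq_mul_eq_norm β
  have hconj : (‖β‖ : ℂ) * conj c ^ 2 = β := by
    rw [← hcβ, mul_comm (c ^ 2), mul_assoc, ← mul_pow, Complex.mul_conj, Complex.normSq_eq_norm_sq,
      hc]
    simp
  rw [← integral_comp_mul_left_of_norm_eq_one hc]
  have hrot : ∀ z : ℂ, -α * ‖c * z‖ ^ 2 + (β * (c * z) ^ 2).re + (γ * (c * z)).re =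
      -α * ‖z‖ ^ 2 + ‖β‖ * (z ^ 2).re + (γ * c * z).re := by
    intro z
    rw [norm_mul, hc, one_mul, mul_pow, ← mul_assoc, mul_comm β, hcβ, Complex.re_ofReal_mul,
      mul_assoc]
  simp_rw [hrot]
  rw [integral_exp_neg_mul_norm_sq_add_mul_re_sq_add_re (by rwa [abs_norm]), norm_mul, hc,
    mul_one, ← Complex.re_ofReal_mul, map_mul, mul_pow, ← mul_assoc, mul_right_comm, hconj]

theorem integral_exp_neg_mul_norm_sq_add_re {κ : ℝ} (hκ : 0 < κ) {τ : ℂ} (hτ : ‖τ‖ < 1) :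
    ∫ z : ℂ, exp (-κ * (‖z‖ ^ 2 + (τ * z ^ 2).re)) = π / (κ * √(1 - ‖τ‖ ^ 2)) := by
  have hnorm : ‖-(κ : ℂ) * τ‖ = κ * ‖τ‖ := by
    rw [norm_mul, norm_neg, Complex.norm_real, norm_of_nonneg hκ.le]
  have h := integral_exp_neg_mul_norm_sq_add_re_mul_sq_add_re (α := κ) (β := -(κ : ℂ) * τ)
    (by rw [hnorm]; exact mul_lt_of_lt_one_right hκ hτ) 0
  simp only [zero_mul, Complex.zero_re, add_zero, norm_zero, map_zero, zero_pow two_ne_zero,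
    mul_zero, zero_div, exp_zero, mul_one, hnorm] at h
  rw [show κ ^ 2 - (κ * ‖τ‖) ^ 2 = κ ^ 2 * (1 - ‖τ‖ ^ 2) by ring, sqrt_mul (sq_nonneg κ),
    sqrt_sq hκ.le] at h
  rw [← h]
  congr 1 with z
  rw [mul_assoc, ← Complex.ofReal_neg, Complex.re_ofReal_mul]
  ring_nf

theorem norm_csqrt_sq (s : ℂ) : ‖csqrt s‖ ^ 2 = ‖s‖ := by
  rw [csqrt, show (1 / 2 : ℂ) = ((2⁻¹ : ℝ) : ℂ) by norm_num, Complex.norm_cpow_real,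
    ← rpow_natCast, ← rpow_mul (norm_nonneg s)]
  norm_num

theorem norm_Kst_sq_mul_gw {s : ℂ} (hs : s ≠ 0) (t u z : ℂ) :
    ‖Kst s t u z‖ ^ 2 * gw u =
      (‖s‖ * π)⁻¹ * exp (-(t / conj s * z ^ 2).re) *
        exp (-1 * ‖u‖ ^ 2 + (t / s * u ^ 2).re + (2 * conj z / s * u).re) := by
  set E := (t * u ^ 2 - conj t * conj z ^ 2 + 2 * u * conj z) / (2 * s)
  have hE : E + E = t / s * u ^ 2 + 2 * conj z / s * u - conj (t / conj s * z ^ 2) := by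
    have : conj s ≠ 0 := by simpa using hs
    simp only [E, map_mul, map_div₀, map_pow, Complex.conj_conj]
    field_simp
    ring
  have hexp : exp E.re ^ 2 * exp (-‖u‖ ^ 2) =
      exp (-(t / conj s * z ^ 2).re) *
        exp (-1 * ‖u‖ ^ 2 + (t / s * u ^ 2).re + (2 * conj z / s * u).re) := by
    have hre := congrArg Complex.re hE
    simp only [Complex.sub_re, Complex.add_re, Complex.conj_re] at hre
    rw [sq, ← exp_add, ← exp_add, ← exp_add]
    congr 1
    linarith
  calc ‖Kst s t u z‖ ^ 2 * gw u = (‖s‖ * π)⁻¹ * (exp E.re ^ 2 * exp (-‖u‖ ^ 2)) := by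
        rw [Kst, gw, norm_mul, norm_inv, Complex.norm_exp, mul_pow, inv_pow, norm_csqrt_sq]
        ring
    _ = _ := by rw [hexp]; ring

/-- The Berezin transform of `|T^{(s,t)}|²` at `z`. -/
noncomputable def berezinKst (s t z : ℂ) : ℝ := exp (-‖z‖ ^ 2) * ∫ u, ‖Kst s t u z‖ ^ 2 * gw u

theorem berezinKst_eq {s t : ℂ} (hts : ‖t‖ < ‖s‖) (z : ℂ) :
    berezinKst s t z =
      (√(‖s‖ ^ 2 - ‖t‖ ^ 2))⁻¹ *
        exp (-((‖s‖ ^ 2 - ‖t‖ ^ 2 - 1) / (‖s‖ ^ 2 - ‖t‖ ^ 2)) *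
          (‖z‖ ^ 2 + (t / conj s * z ^ 2).re)) := by
  have ha : 0 < ‖s‖ := (norm_nonneg t).trans_lt hts
  have hs : s ≠ 0 := norm_pos_iff.mp ha
  have hD : 0 < ‖s‖ ^ 2 - ‖t‖ ^ 2 := by nlinarith [norm_nonneg t]
  have hβ : ‖t / s‖ < 1 := by rwa [norm_div, div_lt_one ha]
  have h1 : (1 : ℝ) ^ 2 - ‖t / s‖ ^ 2 = (‖s‖ ^ 2 - ‖t‖ ^ 2) / ‖s‖ ^ 2 := by
    rw [norm_div]; field_simp
  have hγ : ‖2 * conj z / s‖ ^ 2 = 4 * ‖z‖ ^ 2 / ‖s‖ ^ 2 := by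
    rw [norm_div, norm_mul, Complex.norm_conj]; norm_num; ring
  have hβγ : (t / s * conj (2 * conj z / s) ^ 2).re = 4 * (t / conj s * z ^ 2).re / ‖s‖ ^ 2 := by
    have : t / s * conj (2 * conj z / s) ^ 2 = (4 / ‖s‖ ^ 2 : ℝ) * (t / conj s * z ^ 2) := by
      have hcs : conj s ≠ 0 := by simpa using hs
      rw [Complex.ofReal_div, Complex.ofReal_pow, ← Complex.mul_conj', map_div₀, map_mul,
        Complex.conj_conj, map_ofNat]
      push_cast
      field_simp
      ring
    rw [this, Complex.re_ofReal_mul]; ring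
  simp_rw [berezinKst, norm_Kst_sq_mul_gw hs]
  rw [integral_const_mul, integral_exp_neg_mul_norm_sq_add_re_mul_sq_add_re hβ, h1, hγ, hβγ,
    sqrt_div hD.le, sqrt_sq ha.le]
  calc _ = ((‖s‖ * π)⁻¹ * (π / (√(‖s‖ ^ 2 - ‖t‖ ^ 2) / ‖s‖))) *
        exp (-‖z‖ ^ 2 + -(t / conj s * z ^ 2).re +
          (1 * (4 * ‖z‖ ^ 2 / ‖s‖ ^ 2) + 4 * (t / conj s * z ^ 2).re / ‖s‖ ^ 2) /
            (4 * ((‖s‖ ^ 2 - ‖t‖ ^ 2) / ‖s‖ ^ 2))) := by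
        rw [exp_add, exp_add]; ring
    _ = _ := by
        congr 1
        · field_simp
        · congr 1; field_simp; ring

theorem stmt5 (p : ℝ) (hp : 0 < p) (s t : ℂ)
    (hst : ‖s‖ ^ 2 > ‖t‖ ^ 2 + 1) :
    (∫ z : ℂ, (Real.exp (-‖z‖ ^ 2) *
        ∫ u : ℂ, ‖Kst s t u z‖ ^ 2 * gw u) ^ (p / 2))
      = 2 * Real.pi * ‖s‖ /
          (p * (‖s‖ ^ 2 - ‖t‖ ^ 2 - 1) *
            (‖s‖ ^ 2 - ‖t‖ ^ 2) ^ ((p - 2) / 4)) := by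
  set D := ‖s‖ ^ 2 - ‖t‖ ^ 2 with hD
  have hD1 : 1 < D := by linarith
  have hD0 : 0 ≤ D := by linarith
  have hts : ‖t‖ < ‖s‖ := by nlinarith [norm_nonneg t, norm_nonneg s]
  have ha : 0 < ‖s‖ := (norm_nonneg t).trans_lt hts
  have hτ : ‖t / conj s‖ = ‖t‖ / ‖s‖ := by rw [norm_div, Complex.norm_conj]
  have hκ : 0 < p / 2 * ((D - 1) / D) := by have := sub_pos.2 hD1; positivity
  have hpow : ∀ x : ℝ, ((√D)⁻¹ * exp (-((D - 1) / D) * x)) ^ (p / 2) =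
      D ^ (-(p / 4)) * exp (-(p / 2 * ((D - 1) / D)) * x) := by
    intro x
    rw [mul_rpow (by positivity) (exp_pos _).le, ← exp_mul, sqrt_eq_rpow, ← rpow_neg hD0,
      ← rpow_mul hD0]
    ring_nf
  change ∫ z, berezinKst s t z ^ (p / 2) = _
  simp_rw [berezinKst_eq hts, ← hD, hpow]
  rw [integral_const_mul, integral_exp_neg_mul_norm_sq_add_re hκ
    (by rw [hτ, div_lt_one ha]; exact hts), hτ, div_pow, one_sub_div (by positivity), ← hD,
    sqrt_div (by linarith), sqrt_sq ha.le]
  have hsplit : D ^ (-(p / 4)) = (D ^ ((p - 2) / 4))⁻¹ * (√D)⁻¹ := by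
    rw [sqrt_eq_rpow, ← rpow_neg hD0, ← rpow_neg hD0, ← rpow_add (by linarith)]
    ring_nf
  have hDm1 : D - 1 ≠ 0 := by linarith
  rw [hsplit]
  field_simp
  exact (sq_sqrt hD0).symm
end

section
/- Let s, t ∈ ℂ with |s|² > |t|² + 1. Then the integral π⁻¹·∫_ℂ e^{−|z|²}·K^{(s,t)}(z,z)·dA(z) converges absolutely and equals (1/√s)·√( s²/((s−1)² + |t|²) ), where both square roots are principal. (This integral equals the trace of the trace-class operator T^{(s,t)} on the Fock space F².) -/
open MeasureTheory Real Filter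

/-!
Rotating the plane by a unit `u` with `t u² = i‖t‖` leaves `e^{-|z|²}` and `dA` unchanged and turns
the exponent into the diagonal form `-a x² - b y²` with `a = 1 - (1 + i‖t‖)/s`,
`b = 1 - (1 - i‖t‖)/s`. The hypothesis says `|1 ± i‖t‖| < |s|`, so `Re a, Re b > 0`, and the
integral factors into two complex Gaussians: `√(π/a) √(π/b) = π / √(ab)`, the principal roots
combining because `π/a` and `π/b` lie in the right half-plane. Finally
`ab = ((s - 1)² + ‖t‖²) / s²`.
-/

open Complex ComplexConjugate

namespace Complex

theorem mul_cpow_of_arg_add_mem {x y : ℂ} (hx : x ≠ 0) (hy : y ≠ 0)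
    (h : x.arg + y.arg ∈ Set.Ioc (-π) π) (z : ℂ) : (x * y) ^ z = x ^ z * y ^ z := by
  rw [cpow_def_of_ne_zero (mul_ne_zero hx hy), cpow_def_of_ne_zero hx, cpow_def_of_ne_zero hy,
    log_mul hx hy h, add_mul, exp_add]

theorem mul_cpow_of_re_pos {x y : ℂ} (hx : 0 < x.re) (hy : 0 < y.re) (z : ℂ) :
    (x * y) ^ z = x ^ z * y ^ z := by
  have hx' := abs_lt.mp (abs_arg_lt_pi_div_two_iff.mpr (Or.inl hx))
  have hy' := abs_lt.mp (abs_arg_lt_pi_div_two_iff.mpr (Or.inl hy))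
  exact mul_cpow_of_arg_add_mem (ne_zero_of_re_pos hx) (ne_zero_of_re_pos hy)
    ⟨by linarith, by linarith⟩ z

theorem ofReal_sq_mul_cpow_half {r : ℝ} (hr : 0 < r) (x : ℂ) :
    ((r : ℂ) ^ 2 * x) ^ (1 / 2 : ℂ) = r * x ^ (1 / 2 : ℂ) := by
  rcases eq_or_ne x 0 with rfl | hx
  · simp
  have hr2 : ((r : ℂ) ^ 2).arg = 0 := by
    rw [← ofReal_pow]; exact arg_ofReal_of_nonneg (by positivity)
  rw [mul_cpow_of_arg_add_mem (pow_ne_zero 2 (ofReal_ne_zero.mpr hr.ne')) hx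
    (by rw [hr2, zero_add]; exact ⟨neg_pi_lt_arg x, arg_le_pi x⟩), one_div,
    sq_cpow_two_inv (by simpa using hr)]

theorem integrable_re_mul_im {𝕜 : Type*} [RCLike 𝕜] {f g : ℝ → 𝕜} (hf : Integrable f)
    (hg : Integrable g) : Integrable fun z : ℂ => f z.re * g z.im := by
  have hprod : Integrable (fun p : ℝ × ℝ => f p.1 * g p.2) := by
    rw [Measure.volume_eq_prod]; exact hf.mul_prod hg
  exact (volume_preserving_equiv_real_prod.integrable_comp_emb
    measurableEquivRealProd.measurableEmbedding).mpr hprod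

theorem integral_re_mul_im {𝕜 : Type*} [RCLike 𝕜] (f g : ℝ → 𝕜) :
    ∫ z : ℂ, f z.re * g z.im = (∫ x, f x) * ∫ y, g y := by
  rw [← integral_prod_mul, ← Measure.volume_eq_prod]
  exact volume_preserving_equiv_real_prod.integral_comp' (fun p : ℝ × ℝ => f p.1 * g p.2)

end Complex

section Gaussian

variable {a b : ℂ}

theorem integrable_cexp_neg_mul_re_sq_mul_cexp_neg_mul_im_sq (ha : 0 < a.re) (hb : 0 < b.re) :
    Integrable fun z : ℂ => cexp (-a * z.re ^ 2) * cexp (-b * z.im ^ 2) :=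
  integrable_re_mul_im (integrable_cexp_neg_mul_sq ha) (integrable_cexp_neg_mul_sq hb)

theorem integral_cexp_neg_mul_re_sq_mul_cexp_neg_mul_im_sq (ha : 0 < a.re) (hb : 0 < b.re) :
    ∫ z : ℂ, cexp (-a * z.re ^ 2) * cexp (-b * z.im ^ 2) = π * (a * b)⁻¹ ^ (1 / 2 : ℂ) := by
  have hπdiv {c : ℂ} (hc : 0 < c.re) : 0 < (π / c : ℂ).re := by
    rw [div_eq_mul_inv, re_ofReal_mul, inv_re]
    exact mul_pos pi_pos (div_pos hc (normSq_pos.mpr (ne_zero_of_re_pos hc)))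
  rw [integral_re_mul_im (fun x => cexp (-a * x ^ 2)) (fun y => cexp (-b * y ^ 2)),
    integral_gaussian_complex ha, integral_gaussian_complex hb,
    ← mul_cpow_of_re_pos (hπdiv ha) (hπdiv hb), ← ofReal_sq_mul_cpow_half pi_pos]
  congr 1
  field_simp [ne_zero_of_re_pos ha, ne_zero_of_re_pos hb]

end Gaussian

theorem re_one_sub_div_pos {w s : ℂ} (h : ‖w‖ < ‖s‖) : 0 < (1 - w / s).re := by
  have hs : 0 < ‖s‖ := (norm_nonneg w).trans_lt h
  have : (w / s).re < 1 :=
    (re_le_norm _).trans_lt (by rwa [norm_div, div_lt_one hs])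
  rw [sub_re, one_re]; linarith

theorem norm_one_add_I_mul_ofReal_sq (r : ℝ) : ‖1 + I * r‖ ^ 2 = 1 + r ^ 2 := by
  rw [Complex.sq_norm, mul_comm I, ← ofReal_one, normSq_add_mul_I, one_pow]

theorem Kst_mul_circle (s t z w : ℂ) (u : Circle) :
    Kst s t (u * z) (u * w) = Kst s (t * u ^ 2) z w := by
  have hu : (u : ℂ) * conj (u : ℂ) = 1 := by simp [Complex.mul_conj]
  unfold Kst
  congr 3
  simp only [map_mul, map_pow]
  linear_combination 2 * z * conj w * hu

theorem exists_circle_mul_sq_eq_I_mul_norm (t : ℂ) : ∃ u : Circle, t * u ^ 2 = I * ‖t‖ := by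
  refine ⟨Circle.exp ((π / 2 - t.arg) / 2), ?_⟩
  conv_lhs => arg 1; rw [← norm_mul_exp_arg_mul_I t]
  rw [Circle.coe_exp, ← Complex.exp_nat_mul, mul_assoc, ← Complex.exp_add]
  have : (t.arg : ℂ) * I + (2 : ℕ) * (((π / 2 - t.arg) / 2 : ℝ) * I) = (π / 2 : ℝ) * I := by
    push_cast; ring
  rw [this, exp_mul_I, ← ofReal_cos, ← ofReal_sin, Real.cos_pi_div_two, Real.sin_pi_div_two]
  push_cast; ring

theorem exp_neg_norm_sq_mul_Kst_I_mul_self (s z : ℂ) (r : ℝ) :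
    (rexp (-‖z‖ ^ 2) : ℂ) * Kst s (I * r) z z = (csqrt s)⁻¹ *
      (cexp (-(1 - (1 + I * r) / s) * z.re ^ 2) *
        cexp (-(1 - (1 + I * (-r : ℝ)) / s) * z.im ^ 2)) := by
  have hnorm : ((-‖z‖ ^ 2 : ℝ) : ℂ) = -(z.re ^ 2 + z.im ^ 2) := by
    rw [← normSq_eq_norm_sq, normSq_apply]; push_cast; ring
  rw [Kst, ofReal_exp, mul_left_comm, ← Complex.exp_add, ← Complex.exp_add, hnorm]
  congr 2
  have hz := (re_add_im z).symm
  generalize z.re = x, z.im = y at hz ⊢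
  subst hz
  simp only [map_mul, map_add, conj_ofReal, conj_I, ofReal_neg]
  rw [div_eq_mul_inv, div_eq_mul_inv, div_eq_mul_inv, mul_inv]
  linear_combination (y ^ 2 * I * r - y ^ 2) * s⁻¹ * I_sq

theorem stmt7 (s t : ℂ) (hst : ‖s‖ ^ 2 > ‖t‖ ^ 2 + 1) :
    Integrable (fun z : ℂ => (Real.exp (-‖z‖ ^ 2) : ℂ) * Kst s t z z) ∧
    (Real.pi : ℂ)⁻¹ * (∫ z : ℂ, (Real.exp (-‖z‖ ^ 2) : ℂ) * Kst s t z z)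
      = (csqrt s)⁻¹ *
          csqrt (s ^ 2 / ((s - 1) ^ 2 + ((‖t‖ ^ 2 : ℝ) : ℂ))) := by
  set f : ℂ → ℂ := fun z => (rexp (-‖z‖ ^ 2) : ℂ) * Kst s t z z
  have hs : s ≠ 0 := by rintro rfl; rw [norm_zero] at hst; nlinarith
  have hre_pos (r : ℝ) (hr : r ^ 2 = ‖t‖ ^ 2) : 0 < (1 - (1 + I * r) / s).re := by
    refine re_one_sub_div_pos (lt_of_pow_lt_pow_left₀ 2 (norm_nonneg s) ?_)
    rw [norm_one_add_I_mul_ofReal_sq, hr]; linarith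
  have ha := hre_pos ‖t‖ rfl
  have hb := hre_pos (-‖t‖) (neg_sq _)
  obtain ⟨u, hu⟩ := exists_circle_mul_sq_eq_I_mul_norm t
  have hrot : f ∘ rotation u = fun z => (csqrt s)⁻¹ *
      (cexp (-(1 - (1 + I * ‖t‖) / s) * z.re ^ 2) *
        cexp (-(1 - (1 + I * (-‖t‖ : ℝ)) / s) * z.im ^ 2)) := by
    ext z
    simp only [f, Function.comp_apply, rotation_apply, Kst_mul_circle, hu, norm_mul,
      Circle.norm_coe, one_mul, exp_neg_norm_sq_mul_Kst_I_mul_self]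
  refine ⟨(MeasureTheory.integrable_comp (rotation u) f).mp ?_, ?_⟩
  · rw [hrot]
    exact (integrable_cexp_neg_mul_re_sq_mul_cexp_neg_mul_im_sq ha hb).const_mul _
  · have hprod : (1 - (1 + I * ‖t‖) / s) * (1 - (1 + I * (-‖t‖ : ℝ)) / s)
        = ((s - 1) ^ 2 + ((‖t‖ ^ 2 : ℝ) : ℂ)) / s ^ 2 := by
      push_cast; field_simp; linear_combination (-(‖t‖ : ℂ) ^ 2) * I_sq
    rw [← MeasureTheory.integral_comp (rotation u) f]
    change (π : ℂ)⁻¹ * ∫ z, (f ∘ rotation u) z = _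
    rw [hrot, integral_const_mul, integral_cexp_neg_mul_re_sq_mul_cexp_neg_mul_im_sq ha hb,
      hprod, inv_div, ← csqrt]
    field_simp [ofReal_ne_zero.mpr pi_ne_zero]
end

section
/- Let s, t ∈ ℂ with |s|² > |t|² + 1. Then there exists a unique γ ∈ ℂ with |γ| < 1 satisfying conj(s·t)·γ² + (|s|²+|t|²+1)·γ + s·t = 0. Moreover, for this γ the number |s|² + γ·conj(s·t) is real and equals ( (|s|²−|t|²−1) + √((|s|²−|t|²−1)² + 4|s|²) )/2, which is strictly greater than |s|; consequently λ₀ = |s|/(|s|² + γ·conj(s·t)) lies in the open interval (0,1). -/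
open MeasureTheory Real Filter

/-!
Writing `c = s t` and `B = |s|² + |t|² + 1 > 2|c|`, the quadratic has the root `γ = r c`, where `r`
is the root of smaller modulus of the real quadratic `|c|² r² + B r + 1`; this root lies in the
unit disk. Two distinct roots `z, w` satisfy `conj c (z + w) = -B`, which is impossible when both
lie in the unit disk, so the root is unique. Finally `|s|² + γ conj c = |s|² + r |c|²` is evaluated
by the real quadratic formula, using `B² - 4|c|² = (|s|² - |t|² - 1)² + 4|s|²`.
-/

open ComplexConjugate

namespace Complex

/-- The root of smaller modulus of `conj c * z ^ 2 + B * z + c`: the real factor is the smaller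
root of `‖c‖² r² + B r + 1`, rationalized so that nothing is divided by `‖c‖`. -/
noncomputable def diskRoot (c : ℂ) (B : ℝ) : ℂ :=
  ((-2 / (B + √(B ^ 2 - 4 * ‖c‖ ^ 2)) : ℝ) : ℂ) * c

variable {c : ℂ} {B : ℝ}

lemma add_sqrt_sq_sub_pos (h : 2 * ‖c‖ < B) : 0 < B + √(B ^ 2 - 4 * ‖c‖ ^ 2) := by
  nlinarith [norm_nonneg c, Real.sqrt_nonneg (B ^ 2 - 4 * ‖c‖ ^ 2)]

lemma diskRoot_mul_conj (h : 2 * ‖c‖ < B) :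
    diskRoot c B * conj c = (((√(B ^ 2 - 4 * ‖c‖ ^ 2) - B) / 2 : ℝ) : ℂ) := by
  have hΔ : 0 ≤ B ^ 2 - 4 * ‖c‖ ^ 2 := by nlinarith [norm_nonneg c]
  have hsq := Real.sq_sqrt hΔ
  have hpos := add_sqrt_sq_sub_pos h
  rw [diskRoot, mul_assoc, mul_conj', ← ofReal_pow, ← ofReal_mul]
  congr 1
  field_simp
  linear_combination -hsq

lemma diskRoot_isRoot (h : 2 * ‖c‖ < B) :
    conj c * diskRoot c B ^ 2 + (B : ℂ) * diskRoot c B + c = 0 := by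
  have hr :
      ((-2 / (B + √(B ^ 2 - 4 * ‖c‖ ^ 2)) * (B + √(B ^ 2 - 4 * ‖c‖ ^ 2)) : ℝ) : ℂ) = -2 := by
    rw [div_mul_cancel₀ _ (add_sqrt_sq_sub_pos h).ne', ofReal_neg, ofReal_ofNat]
  have hprod := diskRoot_mul_conj h
  rw [diskRoot] at hprod ⊢
  generalize -2 / (B + √(B ^ 2 - 4 * ‖c‖ ^ 2)) = r at hr hprod ⊢
  push_cast at hr hprod ⊢
  linear_combination (r : ℂ) * c * hprod + c / 2 * hr

lemma norm_diskRoot_lt_one (h : 2 * ‖c‖ < B) : ‖diskRoot c B‖ < 1 := by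
  have hpos := add_sqrt_sq_sub_pos h
  rw [diskRoot, norm_mul, norm_real, Real.norm_eq_abs, abs_div, abs_neg, abs_two,
    abs_of_pos hpos, div_mul_eq_mul_div, div_lt_one hpos]
  nlinarith [Real.sqrt_nonneg (B ^ 2 - 4 * ‖c‖ ^ 2)]

lemma eq_of_isRoot_of_norm_lt_one (h : 2 * ‖c‖ < B) {z w : ℂ} (hz : ‖z‖ < 1) (hw : ‖w‖ < 1)
    (hz₀ : conj c * z ^ 2 + (B : ℂ) * z + c = 0) (hw₀ : conj c * w ^ 2 + (B : ℂ) * w + c = 0) :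
    z = w := by
  have hfac : (z - w) * (conj c * (z + w) + B) = 0 := by linear_combination hz₀ - hw₀
  refine sub_eq_zero.mp ((mul_eq_zero.mp hfac).resolve_right fun hsum => ?_)
  have hnorm : ‖conj c * (z + w)‖ = B := by
    rw [eq_neg_of_add_eq_zero_left hsum, norm_neg, norm_real, Real.norm_eq_abs,
      abs_of_pos (by linarith [norm_nonneg c])]
  have : ‖conj c * (z + w)‖ ≤ 2 * ‖c‖ := by
    rw [norm_mul, norm_conj, mul_comm]
    exact mul_le_mul_of_nonneg_right
      ((norm_add_le z w).trans (by linarith)) (norm_nonneg c)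
  linarith

lemma existsUnique_isRoot_norm_lt_one (h : 2 * ‖c‖ < B) :
    ∃! z : ℂ, ‖z‖ < 1 ∧ conj c * z ^ 2 + (B : ℂ) * z + c = 0 :=
  ⟨diskRoot c B, ⟨norm_diskRoot_lt_one h, diskRoot_isRoot h⟩,
    fun _ ⟨hz, hz₀⟩ => eq_of_isRoot_of_norm_lt_one h hz (norm_diskRoot_lt_one h) hz₀
      (diskRoot_isRoot h)⟩

end Complex

lemma two_mul_norm_mul_lt_sq_add_sq_add_one (s t : ℂ) : 2 * ‖s * t‖ < ‖s‖ ^ 2 + ‖t‖ ^ 2 + 1 := by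
  rw [norm_mul]
  nlinarith [sq_nonneg (‖s‖ - ‖t‖)]

lemma lt_half_add_sqrt_sq_add {a d : ℝ} (ha : 0 < a) (hd : 0 < d) :
    a < (d + √(d ^ 2 + 4 * a ^ 2)) / 2 := by
  have hsq := Real.sq_sqrt (by positivity : 0 ≤ d ^ 2 + 4 * a ^ 2)
  nlinarith [Real.sqrt_nonneg (d ^ 2 + 4 * a ^ 2), mul_pos ha hd]

theorem stmt8 (s t : ℂ) (hst : ‖s‖ ^ 2 > ‖t‖ ^ 2 + 1) :
    (∃! γ : ℂ, ‖γ‖ < 1 ∧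
      (starRingEnd ℂ) (s * t) * γ ^ 2
        + ((‖s‖ ^ 2 + ‖t‖ ^ 2 + 1 : ℝ) : ℂ) * γ + s * t = 0) ∧
    ∀ γ : ℂ, ‖γ‖ < 1 →
      (starRingEnd ℂ) (s * t) * γ ^ 2
        + ((‖s‖ ^ 2 + ‖t‖ ^ 2 + 1 : ℝ) : ℂ) * γ + s * t = 0 →
      (((‖s‖ ^ 2 : ℝ) : ℂ) + γ * (starRingEnd ℂ) (s * t)
        = (((‖s‖ ^ 2 - ‖t‖ ^ 2 - 1
            + Real.sqrt ((‖s‖ ^ 2 - ‖t‖ ^ 2 - 1) ^ 2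
                + 4 * ‖s‖ ^ 2)) / 2 : ℝ) : ℂ)) ∧
      ‖s‖ <
        (‖s‖ ^ 2 - ‖t‖ ^ 2 - 1
          + Real.sqrt ((‖s‖ ^ 2 - ‖t‖ ^ 2 - 1) ^ 2
              + 4 * ‖s‖ ^ 2)) / 2 ∧
      0 < ‖s‖ /
        ((‖s‖ ^ 2 - ‖t‖ ^ 2 - 1
          + Real.sqrt ((‖s‖ ^ 2 - ‖t‖ ^ 2 - 1) ^ 2
              + 4 * ‖s‖ ^ 2)) / 2) ∧
      ‖s‖ /
        ((‖s‖ ^ 2 - ‖t‖ ^ 2 - 1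
          + Real.sqrt ((‖s‖ ^ 2 - ‖t‖ ^ 2 - 1) ^ 2
              + 4 * ‖s‖ ^ 2)) / 2) < 1 := by
  have hB := two_mul_norm_mul_lt_sq_add_sq_add_one s t
  have hd : 0 < ‖s‖ ^ 2 - ‖t‖ ^ 2 - 1 := by linarith
  have hs : 0 < ‖s‖ := by nlinarith [norm_nonneg s, norm_nonneg t]
  have hlt := lt_half_add_sqrt_sq_add hs hd
  refine ⟨Complex.existsUnique_isRoot_norm_lt_one hB, fun γ hγ hγ₀ =>
    ⟨?_, hlt, div_pos hs (hs.trans hlt), (div_lt_one (hs.trans hlt)).mpr hlt⟩⟩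
  have hΔ : (‖s‖ ^ 2 + ‖t‖ ^ 2 + 1) ^ 2 - 4 * ‖s * t‖ ^ 2
      = (‖s‖ ^ 2 - ‖t‖ ^ 2 - 1) ^ 2 + 4 * ‖s‖ ^ 2 := by
    rw [norm_mul]; ring
  rw [Complex.eq_of_isRoot_of_norm_lt_one hB hγ (Complex.norm_diskRoot_lt_one hB) hγ₀
    (Complex.diskRoot_isRoot hB), Complex.diskRoot_mul_conj hB, hΔ, ← Complex.ofReal_add]
  congr 1
  ring
end
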